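/- arXiv:2010.04408 — 2 statements merged into one kernel-verified Lean document; each statement's English description precedes it below -/
import Mathlib

section
/- Let A be an N×N real symmetric matrix, D the diagonal matrix with D_{ii} = ∑_j A_{ij}, L = D − A, and C ∈ ℝ^{N×K} with rows C_1,…,C_N and mean row C̄ = (1/N)∑_i C_i. Define f(x, y) = 1 − (1/K)‖x − y‖² for x, y ∈ ℝ^K. Then 2 ∑_{i,j} A_{ij} f(C_i, C_j) − ∑_{i=1}^N ∑_{j=1}^N f(C_i, C_j) = 2 E − N² − (4/K) Tr(Cᵀ L C) + (2N/K) ∑_{i=1}^N ‖C_i − C̄‖², where E = ∑_{i,j} A_{ij}. -/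
open Matrix

lemma euclid_norm_sq (K : ℕ) (v : Fin K → ℝ) :
    ‖(WithLp.equiv 2 (Fin K → ℝ)).symm v‖ ^ 2 = ∑ k, v k ^ 2 := by
  rw [PiLp.norm_sq_eq_of_L2]; simp [sq_abs]

lemma trace_diag_part (N K : ℕ) (A : Matrix (Fin N) (Fin N) ℝ)
    (C : Matrix (Fin N) (Fin K) ℝ) :
    (Cᵀ * (Matrix.diagonal (fun i => ∑ j, A i j)) * C).trace
      = ∑ i, (∑ j, A i j) * (∑ k, C i k ^ 2) := by
  simp only [Matrix.trace, Matrix.diag, Matrix.mul_apply, Matrix.transpose_apply,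
    Matrix.diagonal_apply, mul_ite, mul_zero, ite_mul, zero_mul,
    Finset.sum_ite_eq, Finset.mem_univ, if_true, Finset.mul_sum, Finset.sum_mul]
  rw [Finset.sum_comm]
  refine Finset.sum_congr rfl fun i _ => ?_
  simp only [Finset.sum_ite_eq', Finset.mem_univ, if_true]
  exact Finset.sum_congr rfl fun k _ => Finset.sum_congr rfl fun j _ => by ring

lemma trace_A_part (N K : ℕ) (A : Matrix (Fin N) (Fin N) ℝ)
    (C : Matrix (Fin N) (Fin K) ℝ) (hAs : ∀ i j, A i j = A j i) :
    (Cᵀ * A * C).trace = ∑ i, ∑ j, A i j * (∑ k, C i k * C j k) := by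
  simp only [Matrix.trace, Matrix.diag, Matrix.mul_apply, Matrix.transpose_apply,
    Finset.mul_sum, Finset.sum_mul]
  rw [Finset.sum_comm]
  refine Finset.sum_congr rfl fun i _ => ?_
  rw [Finset.sum_comm]
  refine Finset.sum_congr rfl fun j _ => ?_
  refine Finset.sum_congr rfl fun k _ => ?_
  rw [hAs i j]; ring

/-- Reconstruction objective decomposition (Claim 4.1): for a symmetric real
matrix `A` with Laplacian `L = D − A`, soft membership matrix `C` with rows
`C_i` and mean row `C̄`, and `f x y = 1 − (1/K)‖x − y‖²`,
`2 ∑_{i,j} A_{ij} f(C_i,C_j) − ∑_{i,j} f(C_i,C_j)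
  = 2E − N² − (4/K) Tr(Cᵀ L C) + (2N/K) ∑ i, ‖C_i − C̄‖²`
where `E = ∑_{i,j} A_{ij}`. -/
theorem stmt_8 (N K : ℕ) (A : Matrix (Fin N) (Fin N) ℝ) (hsymm : A.IsSymm)
    (C : Matrix (Fin N) (Fin K) ℝ)
    (f : (Fin K → ℝ) → (Fin K → ℝ) → ℝ)
    (hf : ∀ x y, f x y = 1 - (1 / (K : ℝ)) * ‖(WithLp.equiv 2 (Fin K → ℝ)).symm (x - y)‖ ^ 2) :
    2 * (∑ i : Fin N, ∑ j : Fin N, A i j * f (C i) (C j))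
        - ∑ i : Fin N, ∑ j : Fin N, f (C i) (C j) =
      2 * (∑ i : Fin N, ∑ j : Fin N, A i j) - (N : ℝ) ^ 2
        - (4 / (K : ℝ)) * (Cᵀ * (Matrix.diagonal (fun i => ∑ j, A i j) - A) * C).trace
        + (2 * (N : ℝ) / (K : ℝ)) *
            ∑ i : Fin N,
              ‖(WithLp.equiv 2 (Fin K → ℝ)).symm (C i - (N : ℝ)⁻¹ • ∑ j : Fin N, C j)‖ ^ 2 := by
  rcases Nat.eq_zero_or_pos N with hN | hN
  · subst hN
    simp [Matrix.trace, Matrix.mul_apply]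
  have hNne : (N : ℝ) ≠ 0 := Nat.cast_ne_zero.mpr hN.ne'
  have hAs : ∀ i j, A i j = A j i := fun i j => (congrFun (congrFun hsymm i) j).symm
  set s : Fin N → ℝ := fun i => ∑ k, C i k ^ 2 with hs
  set p : Fin N → Fin N → ℝ := fun i j => ∑ k, C i k * C j k with hp
  set T : Fin K → ℝ := fun k => ∑ i, C i k with hT
  -- f expanded
  have hfe : ∀ i j, f (C i) (C j) = 1 - (K : ℝ)⁻¹ * (s i + s j - 2 * p i j) := by
    intro i j
    rw [hf, euclid_norm_sq]
    have : ∑ k, (C i - C j) k ^ 2 = s i + s j - 2 * p i j := by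
      simp only [hs, hp, Pi.sub_apply, Finset.mul_sum, ← Finset.sum_add_distrib,
        ← Finset.sum_sub_distrib]
      exact Finset.sum_congr rfl fun k _ => by ring
    rw [this]; ring
  -- trace computation
  have htr : (Cᵀ * (Matrix.diagonal (fun i => ∑ j, A i j) - A) * C).trace
      = ∑ i, (∑ j, A i j) * s i - ∑ i, ∑ j, A i j * p i j := by
    rw [Matrix.mul_sub, Matrix.sub_mul, Matrix.trace_sub,
      trace_diag_part N K A C, trace_A_part N K A C hAs]
  -- variance computation
  have hvar : ∑ i : Fin N,
      ‖(WithLp.equiv 2 (Fin K → ℝ)).symm (C i - (N : ℝ)⁻¹ • ∑ j : Fin N, C j)‖ ^ 2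
      = ∑ i, s i - (N : ℝ)⁻¹ * ∑ k, T k ^ 2 := by
    have h1 : ∀ i, ‖(WithLp.equiv 2 (Fin K → ℝ)).symm (C i - (N : ℝ)⁻¹ • ∑ j : Fin N, C j)‖ ^ 2
        = ∑ k, (C i k - (N : ℝ)⁻¹ * T k) ^ 2 := by
      intro i
      rw [euclid_norm_sq]
      refine Finset.sum_congr rfl fun k _ => ?_
      simp [hT, Finset.sum_apply]
      exact congrArg (fun x => (C i k - (N : ℝ)⁻¹ * x) ^ 2) (Finset.sum_apply k _ _)
    simp only [h1]
    have h2 : ∀ i, ∑ k, (C i k - (N : ℝ)⁻¹ * T k) ^ 2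
        = s i - 2 * (N : ℝ)⁻¹ * (∑ k, C i k * T k) + (N : ℝ)⁻¹ ^ 2 * ∑ k, T k ^ 2 := by
      intro i
      simp only [hs, Finset.mul_sum, ← Finset.sum_add_distrib, ← Finset.sum_sub_distrib]
      exact Finset.sum_congr rfl fun k _ => by ring
    simp only [h2, Finset.sum_add_distrib, Finset.sum_sub_distrib]
    have h3 : ∑ i : Fin N, 2 * (N : ℝ)⁻¹ * (∑ k, C i k * T k)
        = 2 * (N : ℝ)⁻¹ * ∑ k, T k ^ 2 := by
      rw [← Finset.mul_sum, Finset.sum_comm]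
      congr 1
      refine Finset.sum_congr rfl fun k _ => ?_
      have hTk : ∑ i : Fin N, C i k = T k := rfl
      rw [← Finset.sum_mul, hTk]; ring
    rw [h3, Finset.sum_const, Finset.card_univ, Fintype.card_fin, nsmul_eq_mul]
    field_simp
    ring
  -- symmetry swap for the s j sum
  have hswap : ∑ i, ∑ j, A i j * s j = ∑ i, ∑ j, A i j * s i := by
    rw [Finset.sum_comm]
    exact Finset.sum_congr rfl fun i _ =>
      Finset.sum_congr rfl fun j _ => by rw [hAs i j]
  have hNN : (N : ℝ) * (N : ℝ)⁻¹ = 1 := mul_inv_cancel₀ hNne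
  -- rewrite traces' degree sum
  have hQ : ∑ i, (∑ j, A i j) * s i = ∑ i, ∑ j, A i j * s i := by
    exact Finset.sum_congr rfl fun i _ => Finset.sum_mul ..
  -- double sum of p
  have hPsum : ∑ i, ∑ j, p i j = ∑ k, T k ^ 2 := by
    have h1 : ∀ i, ∑ j, p i j = ∑ k, C i k * T k := by
      intro i
      rw [Finset.sum_comm]
      exact Finset.sum_congr rfl fun k _ => (Finset.mul_sum ..).symm
    simp only [h1]
    rw [Finset.sum_comm]
    refine Finset.sum_congr rfl fun k _ => ?_
    have hTk : ∑ i : Fin N, C i k = T k := rfl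
    rw [← Finset.sum_mul, hTk, sq]
  -- expand ∑∑ A f
  have hAf : ∑ i : Fin N, ∑ j : Fin N, A i j * f (C i) (C j)
      = (∑ i, ∑ j, A i j)
        - ((K : ℝ)⁻¹ * (∑ i, ∑ j, A i j * s i) + (K : ℝ)⁻¹ * (∑ i, ∑ j, A i j * s j)
            - (K : ℝ)⁻¹ * (2 * ∑ i, ∑ j, A i j * p i j)) := by
    have hterm : ∀ i j, A i j * f (C i) (C j)
        = A i j - ((K : ℝ)⁻¹ * (A i j * s i) + (K : ℝ)⁻¹ * (A i j * s j)
            - (K : ℝ)⁻¹ * (2 * (A i j * p i j))) := by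
      intro i j; rw [hfe]; ring
    simp only [hterm, Finset.sum_sub_distrib, Finset.sum_add_distrib, ← Finset.mul_sum]
  -- expand ∑∑ f
  have hF : ∑ i : Fin N, ∑ j : Fin N, f (C i) (C j)
      = (N : ℝ) * (N : ℝ)
        - ((K : ℝ)⁻¹ * ((N : ℝ) * ∑ i, s i) + (K : ℝ)⁻¹ * ((N : ℝ) * ∑ i, s i)
            - (K : ℝ)⁻¹ * (2 * ∑ i, ∑ j, p i j)) := by
    have hterm : ∀ i j : Fin N, f (C i) (C j)
        = 1 - ((K : ℝ)⁻¹ * s i + (K : ℝ)⁻¹ * s j - (K : ℝ)⁻¹ * (2 * p i j)) := by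
      intro i j; rw [hfe]; ring
    simp only [hterm, Finset.sum_sub_distrib, Finset.sum_add_distrib, Finset.sum_const,
      Finset.card_univ, Fintype.card_fin, nsmul_eq_mul, mul_one, ← Finset.mul_sum]
    ring
  rw [hAf, hF, htr, hvar, hswap, hQ, hPsum]
  linear_combination (2 * (K : ℝ)⁻¹ * ∑ k, T k ^ 2) * hNN
end

section
/- Define g₁(λ) = 1 − λ + λ²/2 − λ³/6 (the third-order Taylor approximation of the heat kernel e^{−λ}, i.e., scaling parameter s = 1). Then for every λ_K ∈ [0, 2], ∫_0^{λ_K} (1 − g₁(λ))² dλ + ∫_{λ_K}^{2} g₁(λ)² dλ < λ_K² − λ_K + 2/3. -/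
noncomputable def F1 (x : ℝ) : ℝ :=
  x ^ 3 / 3 - x ^ 4 / 4 + 7 * x ^ 5 / 60 - x ^ 6 / 36 + x ^ 7 / 252

noncomputable def F2 (x : ℝ) : ℝ :=
  x - x ^ 2 + 2 * x ^ 3 / 3 - x ^ 4 / 3 + 7 * x ^ 5 / 60 - x ^ 6 / 36 + x ^ 7 / 252

lemma hF1 (x : ℝ) : HasDerivAt F1 ((x - x ^ 2 / 2 + x ^ 3 / 6) ^ 2) x := by
  have h := (((((hasDerivAt_pow 3 x).div_const 3).sub ((hasDerivAt_pow 4 x).div_const 4)).add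
      (((hasDerivAt_pow 5 x).const_mul 7).div_const 60)).sub
      ((hasDerivAt_pow 6 x).div_const 36)).add ((hasDerivAt_pow 7 x).div_const 252)
  refine h.congr_deriv ?_
  push_cast; ring

lemma hF2 (x : ℝ) : HasDerivAt F2 ((1 - x + x ^ 2 / 2 - x ^ 3 / 6) ^ 2) x := by
  have h := ((((((hasDerivAt_id x).sub (hasDerivAt_pow 2 x)).add
      (((hasDerivAt_pow 3 x).const_mul 2).div_const 3)).sub
      ((hasDerivAt_pow 4 x).div_const 3)).add
      (((hasDerivAt_pow 5 x).const_mul 7).div_const 60)).sub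
      ((hasDerivAt_pow 6 x).div_const 36)).add ((hasDerivAt_pow 7 x).div_const 252)
  refine h.congr_deriv ?_
  push_cast; ring

/-- The `s = 1` instance of Proposition 5.1: for the Heatts filter
`g₁(λ) = 1 − λ + λ²/2 − λ³/6` and every `λ_K ∈ [0, 2]`,
`∫_0^{λ_K} (1 − g₁(λ))² dλ + ∫_{λ_K}^2 g₁(λ)² dλ < λ_K² − λ_K + 2/3`. -/
theorem stmt_12 (lamK : ℝ) (h : lamK ∈ Set.Icc (0 : ℝ) 2)
    (g1 : ℝ → ℝ)
    (hg1 : ∀ lam, g1 lam = 1 - lam + lam ^ 2 / 2 - lam ^ 3 / 6) :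
    (∫ lam in (0 : ℝ)..lamK, (1 - g1 lam) ^ 2) +
        (∫ lam in lamK..(2 : ℝ), (g1 lam) ^ 2) <
      lamK ^ 2 - lamK + 2 / 3 := by
  obtain ⟨h0, h2⟩ := h
  have e1 : (∫ lam in (0 : ℝ)..lamK, (1 - g1 lam) ^ 2) = F1 lamK - F1 0 := by
    rw [show (fun lam => (1 - g1 lam) ^ 2) = fun x => (x - x ^ 2 / 2 + x ^ 3 / 6) ^ 2 by
      ext x; rw [hg1]; ring]
    exact intervalIntegral.integral_eq_sub_of_hasDerivAt (fun x _ => hF1 x)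
      (by apply Continuous.intervalIntegrable; continuity)
  have e2 : (∫ lam in lamK..(2 : ℝ), (g1 lam) ^ 2) = F2 2 - F2 lamK := by
    rw [show (fun lam => (g1 lam) ^ 2) = fun x => (1 - x + x ^ 2 / 2 - x ^ 3 / 6) ^ 2 by
      ext x; rw [hg1]]
    exact intervalIntegral.integral_eq_sub_of_hasDerivAt (fun x _ => hF2 x)
      (by apply Continuous.intervalIntegrable; continuity)
  rw [e1, e2]
  simp only [F1, F2]
  nlinarith [pow_nonneg h0 3, sq_nonneg lamK, mul_nonneg (pow_nonneg h0 3) (sub_nonneg.2 h2),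
    pow_nonneg h0 2]
end
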